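/- arXiv:2410.15502 — 6 statements merged into one kernel-verified Lean document; each statement's English description precedes it below -/
import Mathlib

section
/- For each elementary inequality (i,j|K) with distinct i,j ∈ X and K ⊆ X∖{i,j}, there exists a function g : 2^X → ℝ that satisfies every elementary submodular inequality except (i,j|K). Concretely, with k = |K|, the function g defined by g(iK) = g(jK) = k and g(A) = min{|A|, k+1} for all other subsets A satisfies g(i'K') + g(j'K') − g(K') − g(i'j'K') ≥ 0 for all elementary triplets (i',j'|K') ≠ (i,j|K), while g(iK)+g(jK)−g(K)−g(ijK) = −1. -/
/-!
Write `m(A) = min(|A|, |K| + 1)`; this truncated cardinality is submodular because `t ↦ min(t, c)`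
is concave. The function `g` equals `m` except that it is lowered by one on the two sets `iK`, `jK`
of size `|K| + 1`. Lowering can only hurt the left-hand side of `(i',j'|K')` through `i'K'` or
`j'K'`, and both of them are lowered only when `(i',j'|K') = (i,j|K)`. If just one of them is,
then `|K'| = |K|`, where the inequality for `m` holds with slack `1`.
-/

open Finset

section

variable {ι : Type*} [DecidableEq ι]

theorem Finset.insert_inter_insert_of_ne {a b : ι} (s : Finset ι) (h : a ≠ b) :
    insert a s ∩ insert b s = s := by
  ext x
  simp only [mem_inter, mem_insert]
  constructor
  · rintro ⟨rfl | hx, rfl | hx'⟩ <;> first | exact absurd rfl h | assumption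
  · exact fun hx => ⟨Or.inr hx, Or.inr hx⟩

theorem eq_of_insert_eq_insert_of_insert_eq_insert {i j i' j' : ι} {K K' : Finset ι}
    (hij : i ≠ j) (hij' : i' ≠ j') (hi' : i' ∉ K') (hj' : j' ∉ K')
    (hi : insert i' K' = insert i K) (hj : insert j' K' = insert j K) :
    i' = i ∧ j' = j ∧ K' = K := by
  have hK : K' = K := calc
    K' = insert i' K' ∩ insert j' K' := (insert_inter_insert_of_ne K' hij').symm
    _ = insert i K ∩ insert j K := by rw [hi, hj]
    _ = K := insert_inter_insert_of_ne K hij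
  subst hK
  exact ⟨(insert_inj hi').1 hi, (insert_inj hj').1 hj, rfl⟩

theorem pair_eq_and_eq_of_inserts_eq {i j i' j' : ι} {K K' : Finset ι}
    (hij : i ≠ j) (hij' : i' ≠ j') (hi' : i' ∉ K') (hj' : j' ∉ K')
    (hA : insert i' K' = insert i K ∨ insert i' K' = insert j K)
    (hB : insert j' K' = insert i K ∨ insert j' K' = insert j K) :
    ({i', j'} : Finset ι) = {i, j} ∧ K' = K := by
  rcases hA with hA | hA <;> rcases hB with hB | hB
  · exact absurd ((insert_inj hi').1 (hA.trans hB.symm)) hij'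
  · obtain ⟨rfl, rfl, rfl⟩ := eq_of_insert_eq_insert_of_insert_eq_insert hij hij' hi' hj' hA hB
    exact ⟨rfl, rfl⟩
  · obtain ⟨rfl, rfl, rfl⟩ :=
      eq_of_insert_eq_insert_of_insert_eq_insert hij.symm hij' hi' hj' hA hB
    exact ⟨pair_comm _ _, rfl⟩
  · exact absurd ((insert_inj hi').1 (hA.trans hB.symm)) hij'

theorem min_add_min_add_two_le (a c : ℝ) : min a c + min (a + 2) c ≤ 2 * min (a + 1) c := by
  simp only [min_def]
  split_ifs <;> linarith

noncomputable def elementaryWitness (i j : ι) (K A : Finset ι) : ℝ :=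
  if A = insert i K ∨ A = insert j K then (K.card : ℝ)
  else min (A.card : ℝ) ((K.card : ℝ) + 1)

variable {i j : ι} {K : Finset ι}

theorem elementaryWitness_le (A : Finset ι) :
    elementaryWitness i j K A ≤ min (A.card : ℝ) ((K.card : ℝ) + 1) := by
  unfold elementaryWitness
  split_ifs with hA
  · have hcard : K.card ≤ A.card := by
      rcases hA with rfl | rfl <;> exact card_le_card (subset_insert _ _)
    exact le_min (by exact_mod_cast hcard) (by linarith)
  · rfl

theorem elementaryWitness_of_not_lowered {A : Finset ι}
    (hA : ¬(A = insert i K ∨ A = insert j K)) :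
    elementaryWitness i j K A = min (A.card : ℝ) ((K.card : ℝ) + 1) :=
  if_neg hA

theorem card_eq_of_insert_eq_insert {i' : ι} {K' : Finset ι} (hiK : i ∉ K) (hjK : j ∉ K)
    (hi' : i' ∉ K') (hA : insert i' K' = insert i K ∨ insert i' K' = insert j K) :
    K'.card = K.card := by
  have h := card_insert_of_notMem hi'
  rcases hA with hA | hA
  · rw [hA, card_insert_of_notMem hiK] at h; omega
  · rw [hA, card_insert_of_notMem hjK] at h; omega

theorem elementaryWitness_elementary_nonneg_of_not_lowered {i' j' : ι} {K' : Finset ι}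
    (hiK : i ∉ K) (hjK : j ∉ K) (hij' : i' ≠ j') (hi' : i' ∉ K') (hj' : j' ∉ K')
    (hB : ¬(insert j' K' = insert i K ∨ insert j' K' = insert j K)) :
    0 ≤ elementaryWitness i j K (insert i' K') + elementaryWitness i j K (insert j' K')
      - elementaryWitness i j K K' - elementaryWitness i j K (insert i' (insert j' K')) := by
  have hcard : (insert i' (insert j' K')).card = K'.card + 2 := by
    rw [card_insert_of_notMem (by simp [hij', hi']), card_insert_of_notMem hj']
  have hK' := elementaryWitness_le (i := i) (j := j) (K := K) K'
  have hK'ij := elementaryWitness_le (i := i) (j := j) (K := K) (insert i' (insert j' K'))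
  rw [hcard] at hK'ij
  rw [elementaryWitness_of_not_lowered hB, card_insert_of_notMem hj']
  push_cast at hK'ij ⊢
  by_cases hA : insert i' K' = insert i K ∨ insert i' K' = insert j K
  · -- here `|K'| = |K|`, so the inequality for `m` has slack `1`
    have hk : (K'.card : ℝ) = K.card := by
      exact_mod_cast card_eq_of_insert_eq_insert hiK hjK hi' hA
    rw [elementaryWitness, if_pos hA]
    rw [hk] at hK' hK'ij ⊢
    rw [min_self]
    linarith [min_le_left (K.card : ℝ) (K.card + 1), min_le_right (K.card + 2 : ℝ) (K.card + 1)]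
  · rw [elementaryWitness_of_not_lowered hA, card_insert_of_notMem hi']
    push_cast
    linarith [min_add_min_add_two_le (K'.card : ℝ) (K.card + 1)]

theorem elementaryWitness_elementary_self (hij : i ≠ j) (hiK : i ∉ K) (hjK : j ∉ K) :
    elementaryWitness i j K (insert i K) + elementaryWitness i j K (insert j K)
      - elementaryWitness i j K K - elementaryWitness i j K (insert i (insert j K)) = -1 := by
  have hci := card_insert_of_notMem hiK
  have hcj := card_insert_of_notMem hjK
  have hcij : (insert i (insert j K)).card = K.card + 2 := by
    rw [card_insert_of_notMem (by simp [hij, hiK]), hcj]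
  have hK : ¬(K = insert i K ∨ K = insert j K) := by
    rintro (h | h) <;> have := congrArg card h <;> omega
  have hijK : ¬(insert i (insert j K) = insert i K ∨ insert i (insert j K) = insert j K) := by
    rintro (h | h) <;> have := congrArg card h <;> omega
  rw [elementaryWitness_of_not_lowered hK, elementaryWitness_of_not_lowered hijK, hcij,
    elementaryWitness, if_pos (Or.inl rfl), elementaryWitness, if_pos (Or.inr rfl)]
  push_cast
  rw [min_eq_left (by linarith), min_eq_right (by linarith)]
  ring

end

variable {α : Type*} [Fintype α] [DecidableEq α]

/-- For each elementary inequality `(i,j|K)` there is a function `g`, concretely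
`g(iK)=g(jK)=|K|` and `g(A)=min{|A|,|K|+1}` otherwise, which satisfies every
elementary submodular inequality except `(i,j|K)`, where it evaluates to `-1`. -/
theorem exists_witness_for_elementary (i j : α) (K : Finset α)
    (hij : i ≠ j) (hiK : i ∉ K) (hjK : j ∉ K) :
    ∃ g : Finset α → ℝ,
      (g = fun A => if A = insert i K ∨ A = insert j K then (K.card : ℝ)
                    else min (A.card : ℝ) ((K.card : ℝ) + 1)) ∧
      (∀ i' j' : α, ∀ K' : Finset α, i' ≠ j' → i' ∉ K' → j' ∉ K' →
        ¬(({i', j'} : Finset α) = {i, j} ∧ K' = K) →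
        0 ≤ g (insert i' K') + g (insert j' K') - g K'
              - g (insert i' (insert j' K'))) ∧
      g (insert i K) + g (insert j K) - g K - g (insert i (insert j K)) = -1 := by
  refine ⟨elementaryWitness i j K, rfl, ?_, ?_⟩
  · intro i' j' K' hij' hi' hj' hne
    by_cases hB : insert j' K' = insert i K ∨ insert j' K' = insert j K
    · by_cases hA : insert i' K' = insert i K ∨ insert i' K' = insert j K
      · exact absurd (pair_eq_and_eq_of_inserts_eq hij hij' hi' hj' hA hB) hne
      · have := elementaryWitness_elementary_nonneg_of_not_lowered hiK hjK hij'.symm hj' hi' hA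
        rwa [insert_comm j' i', add_comm (elementaryWitness i j K (insert j' K'))] at this
    · exact elementaryWitness_elementary_nonneg_of_not_lowered hiK hjK hij' hi' hj' hB
  · exact elementaryWitness_elementary_self hij hiK hjK
end

section
/- Let X be a finite set with |X| = n ≥ 1. The matrix M♯ whose rows are the vectors δ(i,j|K) ∈ ℝ^(2^X) for all distinct i,j ∈ X and K ⊆ X∖{i,j} has rank 2^n − n − 1; equivalently, its kernel is exactly the (n+1)-dimensional space of modular functions. -/
set_option linter.unusedSectionVars false
set_option maxHeartbeats 800000

open Finset

variable {α : Type*} [Fintype α] [DecidableEq α]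

/-- The row `δ(i,j|K)` of the matrix `M♯`: `+1` at `K∪{i}` and `K∪{j}`,
`−1` at `K` and `K∪{i,j}`, `0` elsewhere. -/
def deltaE (i j : α) (K : Finset α) : Finset α → ℝ := fun S =>
  (if S = insert i K then 1 else 0) + (if S = insert j K then 1 else 0)
    - (if S = K then 1 else 0) - (if S = insert i (insert j K) then 1 else 0)

/-- The indicator of the set `A` as a vector. -/
def indE (A : Finset α) : Finset α → ℝ := fun S => if S = A then 1 else 0

lemma deltaE_eq (i j : α) (K : Finset α) :
    deltaE i j K = indE (insert i K) + indE (insert j K) - indE K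
      - indE (insert i (insert j K)) := by
  funext S; simp [deltaE, indE]

def phiAux : Option α → Finset α → ℝ
  | none, _ => 1
  | some i, S => if i ∈ S then 1 else 0

/-- The linear map whose `none` coordinate is the total sum of entries and whose
`some i` coordinate is the sum of entries over sets containing `i`. -/
def phi : (Finset α → ℝ) →ₗ[ℝ] (Option α → ℝ) where
  toFun w o := ∑ S : Finset α, phiAux o S * w S
  map_add' x y := by funext o; simp [mul_add, Finset.sum_add_distrib]
  map_smul' c x := by funext o; simp [Finset.mul_sum, mul_left_comm]

lemma phi_indE (A : Finset α) : phi (indE A) = fun o => phiAux o A := by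
  funext o
  simp [phi, indE, mul_ite, Finset.sum_ite_eq']

lemma phi_deltaE {i j : α} {K : Finset α} (hij : i ≠ j) (hi : i ∉ K) (hj : j ∉ K) :
    phi (deltaE i j K) = 0 := by
  rw [deltaE_eq, map_sub, map_sub, map_add]
  funext o
  simp only [phi_indE, Pi.sub_apply, Pi.add_apply, Pi.zero_apply]
  cases o with
  | none => simp [phiAux]
  | some x =>
    simp only [phiAux, Finset.mem_insert]
    by_cases hx : x = i <;> by_cases hx' : x = j <;> by_cases hxK : x ∈ K <;>
      simp_all

lemma phi_surj : Function.Surjective (phi (α := α)) := by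
  intro c
  refine ⟨(c none - ∑ i : α, c (some i)) • indE ∅ + ∑ i : α, c (some i) • indE {i}, ?_⟩
  rw [map_add, map_smul, map_sum]
  simp only [map_smul, phi_indE]
  funext o
  cases o with
  | none => simp [phiAux]
  | some x => simp [phiAux, Finset.mem_singleton, smul_ite]

def gE : Option α → (Finset α → ℝ)
  | none => indE ∅
  | some i => indE {i}

section
variable (α)
def VE : Submodule ℝ (Finset α → ℝ) := Submodule.span ℝ
  {v : Finset α → ℝ | ∃ i j : α, ∃ K : Finset α,
    i ≠ j ∧ i ∉ K ∧ j ∉ K ∧ v = deltaE i j K}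

def UE : Submodule ℝ (Finset α → ℝ) := Submodule.span ℝ (Set.range (gE (α := α)))
end

lemma indE_mem_sup (S : Finset α) : indE S ∈ VE α ⊔ UE α := by
  induction S using Finset.strongInduction with
  | _ S ih =>
    by_cases hcard : S.card ≤ 1
    · interval_cases h : S.card
      · rw [Finset.card_eq_zero] at h
        subst h
        exact Submodule.mem_sup_right (Submodule.subset_span ⟨none, rfl⟩)
      · rw [Finset.card_eq_one] at h
        obtain ⟨a, rfl⟩ := h
        exact Submodule.mem_sup_right (Submodule.subset_span ⟨some a, rfl⟩)
    · push_neg at hcard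
      rw [Finset.one_lt_card] at hcard
      obtain ⟨i, hiS, j, hjS, hij⟩ := hcard
      set K := (S.erase i).erase j with hK
      have hjK : j ∉ K := Finset.notMem_erase _ _
      have hiK : i ∉ K := fun hc => Finset.notMem_erase i S (Finset.mem_of_mem_erase hc)
      have hins : insert i (insert j K) = S := by
        rw [hK, Finset.insert_erase (Finset.mem_erase.2 ⟨hij.symm, hjS⟩),
          Finset.insert_erase hiS]
      have hdelta : deltaE i j K ∈ VE α :=
        Submodule.subset_span ⟨i, j, K, hij, hiK, hjK, rfl⟩
      have h1 : insert i K ⊂ S := by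
        constructor
        · intro x hx
          rcases Finset.mem_insert.1 hx with rfl | hx
          · exact hiS
          · exact Finset.mem_of_mem_erase (Finset.mem_of_mem_erase hx)
        · intro hsub
          rcases Finset.mem_insert.1 (hsub hjS) with rfl | hc
          · exact hij rfl
          · exact hjK hc
      have h2 : insert j K ⊂ S := by
        constructor
        · intro x hx
          rcases Finset.mem_insert.1 hx with rfl | hx
          · exact hjS
          · exact Finset.mem_of_mem_erase (Finset.mem_of_mem_erase hx)
        · intro hsub
          rcases Finset.mem_insert.1 (hsub hiS) with rfl | hc
          · exact hij rfl
          · exact hiK hc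
      have h3 : K ⊂ S := by
        refine ⟨fun x hx => Finset.mem_of_mem_erase (Finset.mem_of_mem_erase hx), ?_⟩
        intro hsub; exact hiK (hsub hiS)
      have heq : indE S = indE (insert i K) + indE (insert j K) - indE K - deltaE i j K := by
        funext T
        simp only [indE, deltaE, Pi.sub_apply, Pi.add_apply, hins]
        ring
      rw [heq]
      exact sub_mem (sub_mem (add_mem (ih _ h1) (ih _ h2)) (ih _ h3))
        (Submodule.mem_sup_left hdelta)

lemma VE_eq_ker : VE α = LinearMap.ker (phi (α := α)) := by
  apply le_antisymm
  · rw [VE, Submodule.span_le]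
    rintro v ⟨i, j, K, hij, hi, hj, rfl⟩
    exact LinearMap.mem_ker.2 (phi_deltaE hij hi hj)
  · intro w hw
    have hwdec : w = ∑ S : Finset α, w S • indE S := by
      funext T
      simp [indE, smul_ite, Finset.sum_ite_eq]
    have hwsup : w ∈ VE α ⊔ UE α := by
      rw [hwdec]
      exact Submodule.sum_mem _ fun S _ => Submodule.smul_mem _ _ (indE_mem_sup S)
    obtain ⟨v, hv, u, hu, rfl⟩ := Submodule.mem_sup.1 hwsup
    have hvker : phi v = 0 := by
      have : VE α ≤ LinearMap.ker (phi (α := α)) := by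
        rw [VE, Submodule.span_le]
        rintro x ⟨i, j, K, hij, hi, hj, rfl⟩
        exact LinearMap.mem_ker.2 (phi_deltaE hij hi hj)
      exact LinearMap.mem_ker.1 (this hv)
    have huker : phi u = 0 := by
      have := LinearMap.mem_ker.1 hw
      rw [map_add, hvker, zero_add] at this
      exact this
    -- show u = 0
    rw [UE] at hu
    obtain ⟨c, hc⟩ := (Submodule.mem_span_range_iff_exists_fun ℝ).1 hu
    have hphic : ∑ o : Option α, c o • phi (gE o) = 0 := by
      rw [← huker, ← hc, map_sum]
      simp [map_smul]
    have hsome : ∀ x : α, c (some x) = 0 := by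
      intro x
      have := congrFun hphic (some x)
      simp only [Fintype.sum_option, Pi.add_apply, Finset.sum_apply, Pi.smul_apply,
        Pi.zero_apply] at this
      simpa [gE, phi_indE, phiAux, smul_ite, Finset.sum_ite_eq'] using this
    have hnone : c none = 0 := by
      have := congrFun hphic none
      simp only [Fintype.sum_option, Pi.add_apply, Finset.sum_apply, Pi.smul_apply,
        Pi.zero_apply] at this
      simp [gE, phi_indE, phiAux, hsome] at this
      exact this
    have hu0 : u = 0 := by
      rw [← hc]
      rw [Fintype.sum_option]
      simp [hnone, hsome]
    rw [hu0, add_zero]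
    exact hv

/-- The rank of `M♯` (the dimension of the span of its rows) is `2^n − n − 1`. -/
theorem rank_elementary_matrix (h : 1 ≤ Fintype.card α) :
    Module.finrank ℝ ↥(Submodule.span ℝ
      {v : Finset α → ℝ | ∃ i j : α, ∃ K : Finset α,
        i ≠ j ∧ i ∉ K ∧ j ∉ K ∧ v = deltaE i j K}) =
      2 ^ Fintype.card α - Fintype.card α - 1 := by
  have hVE : Submodule.span ℝ
      {v : Finset α → ℝ | ∃ i j : α, ∃ K : Finset α,
        i ≠ j ∧ i ∉ K ∧ j ∉ K ∧ v = deltaE i j K} = VE α := rfl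
  rw [hVE, VE_eq_ker]
  have hrn := LinearMap.finrank_range_add_finrank_ker (phi (α := α))
  have hrange : LinearMap.range (phi (α := α)) = ⊤ :=
    LinearMap.range_eq_top.2 phi_surj
  rw [hrange] at hrn
  have h1 : Module.finrank ℝ (⊤ : Submodule ℝ (Option α → ℝ)) = Fintype.card α + 1 := by
    rw [finrank_top, Module.finrank_fintype_fun_eq_card, Fintype.card_option]
  have h2 : Module.finrank ℝ (Finset α → ℝ) = 2 ^ Fintype.card α := by
    rw [Module.finrank_fintype_fun_eq_card, Fintype.card_finset]
  rw [h1, h2] at hrn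
  have hle : Fintype.card α + 1 ≤ 2 ^ Fintype.card α := Nat.succ_le_of_lt Nat.lt_two_pow_self
  omega
end

section
/- A submodular function f : 2^X → ℝ with f(∅) = 0 that is 'tight at the top' (f(X) = f(X∖{i}) for every i ∈ X) is monotone: A ⊆ B ⊆ X implies f(A) ≤ f(B). In particular every p-standardized submodular function is a tight polymatroid and is non-negative. -/
open Finset

variable {α : Type*} [Fintype α] [DecidableEq α]

/-- A set function is submodular if `f(A)+f(B) ≥ f(A∩B)+f(A∪B)` for all `A,B`. -/
def Submodular (f : Finset α → ℝ) : Prop :=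
  ∀ A B : Finset α, f (A ∩ B) + f (A ∪ B) ≤ f A + f B

/-
Submodularity makes marginal gains shrink as the set grows: for `S ⊆ T` and `i ∉ T`,
`f (T ∪ {i}) - f T ≤ f (S ∪ {i}) - f S`. With `T = X ∖ {i}` tightness at the top makes the
left side vanish, so every marginal gain is nonnegative and `f` is monotone; then
`f A ≥ f ∅ = 0`.
-/

theorem Submodular.insert_sub_le_insert_sub {β : Type*} [DecidableEq β] {f : Finset β → ℝ}
    (hf : Submodular f) {S T : Finset β} (hST : S ⊆ T) {i : β} (hi : i ∉ T) :
    f (insert i T) - f T ≤ f (insert i S) - f S := by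
  have h := hf (insert i S) T
  rw [insert_inter_of_notMem hi, inter_eq_left.2 hST, insert_union, union_eq_right.2 hST] at h
  linarith

theorem Submodular.monotone_of_tight {f : Finset α → ℝ} (hf : Submodular f)
    (htight : ∀ i : α, f (univ.erase i) = f univ) : Monotone f :=
  monotone_iff_forall_le_insert.2 fun S i hi => by
    have h := hf.insert_sub_le_insert_sub (subset_erase.2 ⟨subset_univ S, hi⟩) (notMem_erase i univ)
    rw [insert_erase (mem_univ i), htight] at h
    linarith

/-- A pointed, tight-at-the-top submodular function is monotone, hence a tight
polymatroid; in particular it is non-negative. -/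
theorem pstandardized_monotone_nonneg (f : Finset α → ℝ)
    (hsub : Submodular f) (h0 : f ∅ = 0)
    (htight : ∀ i : α, f (Finset.univ.erase i) = f Finset.univ) :
    (∀ A B : Finset α, A ⊆ B → f A ≤ f B) ∧ (∀ A : Finset α, 0 ≤ f A) := by
  have hmono := hsub.monotone_of_tight htight
  exact ⟨fun _ _ hAB => hmono hAB, fun A => h0 ▸ hmono (empty_subset A)⟩
end

section
/- Every submodular function f on a finite set X can be written uniquely as the sum of a modular function and a p-standardized submodular function (i.e., the equivalence class f + MOD(X) intersects the space {g : g(∅)=0 and g(X∖{i})=g(X) for all i ∈ X} in exactly one element). -/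
open Finset

variable {α : Type*} [Fintype α] [DecidableEq α]

/-- A set function is modular if `m(A)+m(B)=m(A∩B)+m(A∪B)` for all `A,B`. -/
def Modular (m : Finset α → ℝ) : Prop :=
  ∀ A B : Finset α, m A + m B = m (A ∩ B) + m (A ∪ B)

lemma modular_eq_sum (m : Finset α → ℝ) (hm : Modular m) (h0 : m ∅ = 0) :
    ∀ A : Finset α, m A = ∑ i ∈ A, m {i} := by
  intro A
  induction A using Finset.induction_on with
  | empty => simpa using h0
  | @insert a A ha ih =>
    have h := hm {a} A
    have h1 : ({a} : Finset α) ∩ A = ∅ := by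
      simp [Finset.singleton_inter_of_notMem ha]
    have h2 : ({a} : Finset α) ∪ A = insert a A := by
      exact (Finset.insert_eq a A).symm
    rw [h1, h2, h0] at h
    rw [Finset.sum_insert ha, ← ih]
    linarith

/-- Every submodular function is uniquely the sum of a modular function and a
p-standardized submodular function. -/
theorem exists_unique_pstandardization (f : Finset α → ℝ) (hf : Submodular f) :
    ∃! g : Finset α → ℝ, Submodular g ∧ g ∅ = 0 ∧
      (∀ i : α, g (Finset.univ.erase i) = g Finset.univ) ∧
      Modular (fun A => f A - g A) := by
  set w : α → ℝ := fun i => f Finset.univ - f (Finset.univ.erase i) with hw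
  set m : Finset α → ℝ := fun A => f ∅ + ∑ i ∈ A, w i with hmdef
  have hm : Modular m := by
    intro A B
    have key : ∑ i ∈ A, w i + ∑ i ∈ B, w i = ∑ i ∈ A ∩ B, w i + ∑ i ∈ A ∪ B, w i := by
      have h1 : ∑ i ∈ B ∩ A, w i + ∑ i ∈ B \ A, w i = ∑ i ∈ B, w i :=
        Finset.sum_inter_add_sum_sdiff B A w
      have h2 : ∑ i ∈ A ∪ B, w i = ∑ i ∈ A, w i + ∑ i ∈ B \ A, w i := by
        rw [← Finset.sum_union (Finset.disjoint_sdiff), Finset.union_sdiff_self_eq_union]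
      rw [Finset.inter_comm]
      linarith
    simp only [hmdef]
    linarith
  refine ⟨fun A => f A - m A, ⟨?_, ?_, ?_, ?_⟩, ?_⟩
  · intro A B
    have h1 := hf A B
    have h2 := hm A B
    simp only
    linarith
  · simp [hmdef]
  · intro i
    have herase : ∑ j ∈ Finset.univ.erase i, w j = (∑ j ∈ (Finset.univ : Finset α), w j) - w i := by
      rw [Finset.sum_erase_eq_sub (Finset.mem_univ i)]
    simp only [hmdef]; rw [herase]; simp only [hw]
    ring
  · have : (fun A => f A - (f A - m A)) = m := by funext A; ring
    rw [this]; exact hm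
  · intro g ⟨hgs, hg0, hgi, hgm⟩
    funext A
    set h : Finset α → ℝ := fun A => g A - (f A - m A) with hh
    have hhm : Modular h := by
      intro A B
      have h1 := hgm A B
      have h2 := hm A B
      simp only [hh]
      simp only at h1
      linarith
    have hh0 : h ∅ = 0 := by simp [hh, hg0, hmdef]
    have hsum := modular_eq_sum h hhm hh0
    have hwz : ∀ i : α, h {i} = 0 := by
      intro i
      have h1 : h (Finset.univ.erase i) = h Finset.univ := by
        simp only [hh]
        have hgE := hgi i
        have hmE : m (Finset.univ.erase i) = m Finset.univ - w i := by
          simp only [hmdef]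
          rw [Finset.sum_erase_eq_sub (Finset.mem_univ i)]
          ring
        have hfE : f (Finset.univ.erase i) = f Finset.univ - w i := by
          simp only [hw]; ring
        rw [hgE, hmE, hfE]; ring
      rw [hsum (Finset.univ.erase i), hsum Finset.univ,
        Finset.sum_erase_eq_sub (Finset.mem_univ i)] at h1
      linarith
    have := hsum A
    simp only [hwz, Finset.sum_const_zero] at this
    have : g A - (f A - m A) = 0 := this
    linarith
end

section
/- The functions f_J for J ⊆ X with |J| ≥ 2, where f_J(A) = 1 if J ∩ A ≠ ∅ and 0 otherwise, are linearly independent as vectors in ℝ^(2^X); there are 2^n − n − 1 of them when |X| = n. -/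
open Finset

variable (α : Type*) [Fintype α] [DecidableEq α]

/-- `f_J(A) = 1` if `J ∩ A ≠ ∅`, else `0`. -/
def fJ (J : Finset α) : Finset α → ℝ := fun A => if (J ∩ A).Nonempty then 1 else 0

/-! For nonempty `J`, `f_J(X) - f_J(Bᶜ) = [J ⊆ B]`. So the linear map
`φ ↦ (B ↦ φ(X) - φ(Bᶜ))` sends the `f_J` to the indicators `B ↦ [J ⊆ B]`, which are
linearly independent by Möbius inversion: if `∑_{J ⊆ B} c_J = 0` for every `B`, then
`c = 0` by induction on `B`. The count is `2^n` minus the `n + 1` sets of size at most one. -/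

theorem eq_zero_of_forall_sum_powerset_eq_zero {β M : Type*} [DecidableEq β] [AddCommGroup M]
    {c : Finset β → M} (hc : ∀ s : Finset β, ∑ t ∈ s.powerset, c t = 0) (s : Finset β) :
    c s = 0 := by
  induction s using Finset.strongInduction with
  | H s ih =>
    have hsub : ∑ t ∈ s.powerset.erase s, c t = 0 := by
      refine sum_eq_zero fun t ht => ih t ?_
      rw [mem_erase, mem_powerset] at ht
      exact ssubset_of_subset_of_ne ht.2 ht.1
    simpa [← add_sum_erase _ _ (mem_powerset_self s), hsub] using hc s

theorem linearIndependent_subset_indicator {β R : Type*} [Fintype β] [DecidableEq β] [Ring R] :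
    LinearIndependent R fun t s : Finset β => if t ⊆ s then (1 : R) else 0 := by
  rw [Fintype.linearIndependent_iff]
  intro c hc
  refine eq_zero_of_forall_sum_powerset_eq_zero fun s => ?_
  have := congrFun hc s
  simp only [Finset.sum_apply, Pi.smul_apply, smul_eq_mul, mul_ite, mul_one, mul_zero] at this
  rwa [← sum_filter, filter_subset_univ] at this

theorem fJ_univ_sub_fJ_compl {J : Finset α} (hJ : J.Nonempty) (B : Finset α) :
    fJ α J univ - fJ α J Bᶜ = if J ⊆ B then 1 else 0 := by
  have hmeet : (J ∩ Bᶜ).Nonempty ↔ ¬ J ⊆ B := by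
    rw [← not_iff_not, not_nonempty_iff_eq_empty, ← disjoint_iff_inter_eq_empty,
      disjoint_compl_right_iff, not_not]
  by_cases h : J ⊆ B <;> simp [fJ, hmeet, h, hJ]

theorem fJ_linearIndependent_of_forall_nonempty {p : Finset α → Prop}
    (hp : ∀ J, p J → J.Nonempty) :
    LinearIndependent ℝ (fun J : {J : Finset α // p J} => fJ α J.1) := by
  let T : (Finset α → ℝ) →ₗ[ℝ] Finset α → ℝ :=
    LinearMap.pi fun B => LinearMap.proj (R := ℝ) (φ := fun _ => ℝ) univ - LinearMap.proj Bᶜ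
  refine .of_comp T ?_
  have hT : T ∘ (fun J : {J : Finset α // p J} => fJ α J.1) =
      (fun t s : Finset α => if t ⊆ s then (1 : ℝ) else 0) ∘ Subtype.val := by
    ext J B
    exact fJ_univ_sub_fJ_compl α (hp J.1 J.2) B
  rw [hT]
  exact linearIndependent_subset_indicator.comp _ Subtype.val_injective

theorem card_finset_two_le_card {β : Type*} [Fintype β] :
    Fintype.card {s : Finset β // 2 ≤ s.card} = 2 ^ Fintype.card β - Fintype.card β - 1 := by
  have hsmall : Fintype.card {s : Finset β // ¬ 2 ≤ s.card} = 1 + Fintype.card β := by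
    rw [Fintype.card_congr (Equiv.subtypeEquivRight fun s : Finset β =>
        (by omega : ¬ 2 ≤ s.card ↔ s.card = 0 ∨ s.card = 1)),
      Fintype.card_subtype_or_disjoint _ _
        fun _ h0 h1 s hs => zero_ne_one ((h0 s hs).symm.trans (h1 s hs)),
      Fintype.card_finset_len, Fintype.card_finset_len, Nat.choose_zero_right,
      Nat.choose_one_right]
  have hcompl := Fintype.card_subtype_compl fun s : Finset β => 2 ≤ s.card
  rw [hsmall, Fintype.card_finset] at hcompl
  omega

/-- The functions `f_J` for `|J| ≥ 2` are linearly independent, and there are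
`2^n − n − 1` of them. -/
theorem fJ_linearIndependent :
    LinearIndependent ℝ (fun J : {J : Finset α // 2 ≤ J.card} => fJ α J.1) ∧
    Fintype.card {J : Finset α // 2 ≤ J.card} =
      2 ^ Fintype.card α - Fintype.card α - 1 :=
  ⟨fJ_linearIndependent_of_forall_nonempty α fun _ hJ => card_pos.mp (by omega),
    card_finset_two_le_card⟩
end

section
/- Let X be finite, y ∉ X, Y = X ∪ {y}. If r is an extremal ray of the cone of p-standardized submodular functions on X (r is not a positive conic combination of rays of the cone that are not multiples of r), then its extension r*, defined by r*(A) = r*(A∪{y}) = r(A) for A ⊆ X, generates an extremal ray of the cone of p-standardized submodular functions on Y. Key step: any p-standardized submodular function s on Y with s({y}) = 0 satisfies s(A∪{y}) = s(A) for all A ⊆ X, hence is of the form t* for a p-standardized submodular function t on X. -/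
/-!
A function `s` in the cone on `Y = X ∪ {y}` is monotone under deleting a point, by
submodularity against the coatom `Y ∖ {i}` and tightness at the top. Hence
`s ({y}) ≥ 0`, and when `s ({y}) = 0` submodularity of `A ∖ {y}` against `{y}` gives
`s (A) = s (A ∖ {y})`: such an `s` is `t*` for its restriction `t` to `X`, which lies in
the cone on `X`. If `r* = u + v`, then `u ({y}) + v ({y}) = r (∅) = 0` forces both
terms to vanish, so `u = t*`, `v = t'*` with `r = t + t'`, and extremality of `r`
transfers to `r*`.
-/

open Finset

/-- A p-standardized submodular function on the finite base set `β`: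
submodular, pointed, and tight at the top. -/
def PStdSubmodular {β : Type*} [Fintype β] [DecidableEq β]
    (f : Finset β → ℝ) : Prop :=
  (∀ A B : Finset β, f (A ∩ B) + f (A ∪ B) ≤ f A + f B) ∧ f ∅ = 0 ∧
    ∀ i : β, f (Finset.univ.erase i) = f Finset.univ

variable {α : Type*} [Fintype α] [DecidableEq α]

/-- Extension of `f` to the base set `Y = X ∪ {y}` (here `y = none`):
`f*(A) = f*(A∪{y}) = f(A)` for `A ⊆ X`. -/
def starExt (f : Finset α → ℝ) : Finset (Option α) → ℝ := fun B =>
  f B.eraseNone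

namespace PStdSubmodular

variable {β : Type*} [Fintype β] [DecidableEq β] {f : Finset β → ℝ}

theorem map_erase_le (hf : PStdSubmodular f) (i : β) (A : Finset β) :
    f (A.erase i) ≤ f A := by
  by_cases hi : i ∈ A
  · have h := hf.1 A (univ.erase i)
    have h_inter : A ∩ univ.erase i = A.erase i := by
      ext x; simp [and_comm]
    have h_union : A ∪ univ.erase i = univ := by
      ext x; by_cases hx : x = i <;> simp [hx, hi]
    rw [h_inter, h_union, hf.2.2 i] at h
    linarith
  · rw [erase_eq_of_notMem hi]

theorem map_singleton_nonneg (hf : PStdSubmodular f) (i : β) : 0 ≤ f {i} := by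
  simpa [hf.2.1] using hf.map_erase_le i {i}

theorem map_erase_of_map_singleton_eq_zero (hf : PStdSubmodular f) {i : β}
    (hi : f {i} = 0) (A : Finset β) : f (A.erase i) = f A := by
  by_cases hA : i ∈ A
  · have h := hf.1 (A.erase i) {i}
    have h_inter : A.erase i ∩ {i} = ∅ := by simp
    have h_union : A.erase i ∪ {i} = A := by
      rw [union_singleton, insert_erase hA]
    rw [h_inter, h_union, hf.2.1, hi] at h
    linarith [hf.map_erase_le i A]
  · rw [erase_eq_of_notMem hA]

end PStdSubmodular

section

variable {γ : Type*}

theorem starExt_map_some (f : Finset γ → ℝ) (A : Finset γ) :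
    starExt f (A.map Function.Embedding.some) = f A := by
  rw [starExt, eraseNone_map_some]

theorem starExt_injective : Function.Injective (starExt : (Finset γ → ℝ) → _) := by
  intro f g h
  funext A
  rw [← starExt_map_some f, ← starExt_map_some g, h]

theorem starExt_zero : starExt (0 : Finset γ → ℝ) = 0 := rfl

theorem starExt_add (f g : Finset γ → ℝ) : starExt (f + g) = starExt f + starExt g := rfl

theorem starExt_smul (c : ℝ) (f : Finset γ → ℝ) : starExt (c • f) = c • starExt f := rfl

end

theorem PStdSubmodular.of_starExt {f : Finset α → ℝ} (hf : PStdSubmodular (starExt f)) :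
    PStdSubmodular f := by
  refine ⟨fun A B => ?_, by simpa [starExt] using hf.2.1, fun i => ?_⟩
  · simpa only [← map_inter, ← map_union, starExt_map_some] using
      hf.1 (A.map Function.Embedding.some) (B.map Function.Embedding.some)
  · have h_top : (univ : Finset (Option α)).eraseNone = univ := by ext; simp
    have h_coatom : ((univ : Finset (Option α)).erase (some i)).eraseNone = univ.erase i := by
      ext; simp
    simpa only [starExt, h_top, h_coatom] using hf.2.2 (some i)

theorem PStdSubmodular.exists_eq_starExt {s : Finset (Option α) → ℝ} (hs : PStdSubmodular s)
    (h0 : s {none} = 0) : ∃ t : Finset α → ℝ, PStdSubmodular t ∧ s = starExt t := by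
  have hs_eq : s = starExt fun A => s (A.map Function.Embedding.some) := by
    funext B
    rw [starExt, map_some_eraseNone, hs.map_erase_of_map_singleton_eq_zero h0]
  exact ⟨_, (hs_eq ▸ hs).of_starExt, hs_eq⟩

/-- If `r` generates an extremal ray of the cone of p-standardized submodular
functions on `X`, then `r*` generates an extremal ray of the corresponding cone
on `Y = X ∪ {y}`.  The key step: any `s` in the cone on `Y` with `s({y}) = 0`
is of the form `t*` for some `t` in the cone on `X`. -/
theorem starExt_extremal (r : Finset α → ℝ) (hr : PStdSubmodular r) (hne : r ≠ 0)
    (hext : ∀ u v : Finset α → ℝ, PStdSubmodular u → PStdSubmodular v →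
      r = u + v → (∃ c ≥ (0:ℝ), u = c • r) ∧ (∃ c' ≥ (0:ℝ), v = c' • r)) :
    (∀ s : Finset (Option α) → ℝ, PStdSubmodular s → s {none} = 0 →
      ∃ t : Finset α → ℝ, PStdSubmodular t ∧ s = starExt t) ∧
    starExt r ≠ 0 ∧
    ∀ u v : Finset (Option α) → ℝ, PStdSubmodular u → PStdSubmodular v →
      starExt r = u + v →
      (∃ c ≥ (0:ℝ), u = c • starExt r) ∧ (∃ c' ≥ (0:ℝ), v = c' • starExt r) := by
  refine ⟨fun s hs h0 => hs.exists_eq_starExt h0,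
    fun h => hne (starExt_injective (h.trans starExt_zero.symm)), ?_⟩
  intro u v hu hv huv
  have h_sum : u {none} + v {none} = 0 := by
    rw [← Pi.add_apply, ← huv, starExt, eraseNone_none, hr.2.1]
  have hu_none := hu.map_singleton_nonneg none
  have hv_none := hv.map_singleton_nonneg none
  obtain ⟨tu, htu, rfl⟩ := hu.exists_eq_starExt (by linarith)
  obtain ⟨tv, htv, rfl⟩ := hv.exists_eq_starExt (by linarith)
  obtain ⟨⟨c, hc, rfl⟩, ⟨c', hc', rfl⟩⟩ :=
    hext tu tv htu htv (starExt_injective (huv.trans (starExt_add tu tv).symm))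
  exact ⟨⟨c, hc, starExt_smul c r⟩, ⟨c', hc', starExt_smul c' r⟩⟩
end
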